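/- In the preemptive FIFO buffer model, let B be an initial buffer state and let S be any schedule on input σ starting from B. Then there exists a schedule S' on input σ starting from the empty buffer whose transmitted set is exactly trans(S) ∩ arrivals(σ), the set of packets transmitted by S that arrive in σ (as opposed to residing initially in B); in particular v(S') = ∑_{p ∈ trans(S) ∩ arrivals(σ)} v p. -/

import Mathlib

/-!
Restrict `S` to `A = trans(S) ∩ arrivals(σ)`: at every step keep in the buffer only those
packets of `A` that the new schedule has not transmitted yet. Filtering commutes with every move
of the arrival phase, so only the transmission phase needs care. The new schedule sends the first
pending packet of the buffer of `S`; as packets are distinct, dropping it from the pending set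
turns the filtered buffer of the next step into the tail of the current filtered buffer. The new
buffer starts empty because no packet of `B` arrives in `σ`, and each packet of `A` is sent at
the latest at the step where `S` sends it.
-/

/-- Arrival-phase relation: `ArrStep α K ps b b'` holds iff, starting from buffer `b`,
processing the remaining arriving packets `ps` in order (each dropped or appended to the
buffer tail), with resident packets preemptible at any point, and the buffer never holding
more than `K` packets, can leave the buffer in state `b'` at the end of the arrival phase. -/
inductive ArrStep (α : Type*) (K : ℕ) : List α → List α → List α → Prop
  | nil (b : List α) : ArrStep α K [] b b
  | preempt {ps b₁ b₂ b' : List α} (p : α) :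
      ArrStep α K ps (b₁ ++ b₂) b' → ArrStep α K ps (b₁ ++ p :: b₂) b'
  | drop {ps b b' : List α} (p : α) :
      ArrStep α K ps b b' → ArrStep α K (p :: ps) b b'
  | accept {ps b b' : List α} (p : α) :
      b.length < K → ArrStep α K ps (b ++ [p]) b' → ArrStep α K (p :: ps) b b'

/-- The buffer at the beginning of time step `i` (0-indexed), given the initial buffer `B`
and the buffer states `mid` at the end of each arrival phase: the transmission phase of
step `i - 1` removes (and transmits) the head of the buffer. -/
def bufBefore {α : Type*} {T : ℕ} (B : List α) (mid : Fin T → List α) : ℕ → List α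
  | 0 => B
  | n + 1 => if h : n < T then (mid ⟨n, h⟩).tail else []

/-- A (feasible) schedule over horizon `T` on input `σ`, starting from initial buffer `B`,
with buffer capacity `K`, described by the buffer state `mid i` at the end of the arrival
phase of each time step `i`. -/
structure Schedule (α : Type*) (K T : ℕ) (σ : Fin T → List α) (B : List α) where
  mid : Fin T → List α
  valid : ∀ i : Fin T, ArrStep α K (σ i) (bufBefore B mid i.val) (mid i)

variable {α : Type*} [DecidableEq α]

/-- The set of packets transmitted by a schedule: at each time step whose buffer is
nonempty at the end of the arrival phase, the head packet is transmitted. -/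
def Schedule.trans {K T : ℕ} {σ : Fin T → List α} {B : List α}
    (S : Schedule α K T σ B) : Finset α :=
  Finset.univ.biUnion fun i : Fin T => ((S.mid i).head?).toFinset

/-- The total value transmitted by a schedule. -/
def schedVal (v : α → ℝ) {K T : ℕ} {σ : Fin T → List α} {B : List α}
    (S : Schedule α K T σ B) : ℝ :=
  ∑ p ∈ S.trans, v p

/-- `OPT v K T σ B`: the optimal (supremum) total transmitted value over all schedules
on input `σ` starting from buffer `B`. -/
noncomputable def OPT (v : α → ℝ) (K T : ℕ) (σ : Fin T → List α) (B : List α) : ℝ :=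
  sSup {x | ∃ S : Schedule α K T σ B, x = schedVal v S}

/-- The set of packets arriving in the input `σ`. -/
def arrivals {T : ℕ} (σ : Fin T → List α) : Finset α :=
  Finset.univ.biUnion fun i : Fin T => (σ i).toFinset

/-- The total value of the packets residing in a buffer. -/
def bufVal (v : α → ℝ) (B : List α) : ℝ := (B.map v).sum

/-- The list of all packets of the instance: initial buffer contents plus all arrivals. -/
def instanceList {T : ℕ} (σ : Fin T → List α) (B : List α) : List α :=
  B ++ ((List.finRange T).map σ).flatten

namespace List

theorem Nodup.tail_eq_filter {l : List α} (hl : l.Nodup) :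
    l.tail = l.filter (fun p => l.head? != some p) := by
  cases l with
  | nil => rfl
  | cons x t =>
    rw [filter_cons_of_neg (by simp), eq_comm, tail_cons, filter_eq_self]
    intro p hp
    simp only [head?_cons, bne_iff_ne, ne_eq, Option.some.injEq]
    rintro rfl
    exact (nodup_cons.mp hl).1 hp

omit [DecidableEq α] in
theorem filter_tail_eq_filter {l : List α} {Q : α → Bool} (h : ∀ x ∈ l.head?, Q x = false) :
    l.tail.filter Q = l.filter Q := by
  cases l with
  | nil => rfl
  | cons x t => simp [h x rfl]

omit [DecidableEq α] in
theorem find?_eq_some_of_head? {l : List α} {Q : α → Bool} {p : α} (h : l.head? = some p)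
    (hp : Q p) : l.find? Q = some p := by
  cases l with
  | nil => simp at h
  | cons x t => simp_all

theorem Nodup.filter_tail_eq_tail_filter {l : List α} (hl : l.Nodup) (Q : α → Bool) :
    l.tail.filter (fun p => Q p && l.find? Q != some p) = (l.filter Q).tail := by
  rw [(hl.filter Q).tail_eq_filter, filter_filter, head?_filter, filter_tail_eq_filter]
  · simp only [Bool.and_comm]
  intro x hx
  cases hQ : Q x
  · simp
  · simp [find?_eq_some_of_head? (Option.mem_def.mp hx) hQ]

end List

open List

section ArrStep

omit [DecidableEq α]

variable {K : ℕ} {ps b b' : List α}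

theorem ArrStep.sublist (h : ArrStep α K ps b b') : b' <+ b ++ ps := by
  induction h with
  | nil b => simp
  | preempt p _ ih => exact ih.trans ((sublist_cons_self p _).append_left _ |>.append_right _)
  | drop p _ ih => exact ih.trans ((sublist_cons_self p _).append_left _)
  | accept p _ _ ih => simpa using ih

theorem ArrStep.filter (Q : α → Bool) (h : ArrStep α K ps b b') :
    ArrStep α K ps (b.filter Q) (b'.filter Q) := by
  induction h with
  | nil b => exact .nil _
  | @preempt ps b₁ b₂ b' p _ ih =>
    by_cases hp : Q p
    · simpa [filter_append, hp] using ArrStep.preempt p (by simpa [filter_append] using ih)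
    · simpa [filter_append, hp] using ih
  | drop p _ ih => exact .drop p ih
  | accept p hlen _ ih =>
    by_cases hp : Q p
    · exact .accept p ((length_filter_le _ _).trans_lt hlen) (by simpa [hp] using ih)
    · exact .drop p (by simpa [hp] using ih)

end ArrStep

omit [DecidableEq α] in
theorem bufBefore_succ {T : ℕ} (B : List α) (mid : Fin T → List α) {n : ℕ} (hn : n < T) :
    bufBefore B mid (n + 1) = (mid ⟨n, hn⟩).tail :=
  dif_pos hn

omit [DecidableEq α] in
theorem flatten_map_drop_finRange {T : ℕ} (σ : Fin T → List α) {n : ℕ} (hn : n < T) :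
    (((finRange T).drop n).map σ).flatten
      = σ ⟨n, hn⟩ ++ (((finRange T).drop (n + 1)).map σ).flatten := by
  rw [drop_eq_getElem_cons (by simpa using hn)]
  simp

theorem notMem_arrivals_of_mem {T : ℕ} {σ : Fin T → List α} {B : List α}
    (hnd : (instanceList σ B).Nodup) {p : α} (hp : p ∈ B) : p ∉ arrivals σ := by
  simp only [arrivals, Finset.mem_biUnion, Finset.mem_univ, mem_toFinset, true_and, not_exists]
  intro i hi
  exact disjoint_of_nodup_append hnd hp (mem_flatten_of_mem (mem_map_of_mem (mem_finRange i)) hi)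

namespace Schedule

variable {K T : ℕ} {σ : Fin T → List α} {B : List α}

theorem mem_trans (S : Schedule α K T σ B) {p : α} :
    p ∈ S.trans ↔ ∃ i, (S.mid i).head? = some p := by
  simp [Schedule.trans]

omit [DecidableEq α] in
theorem bufBefore_append_sublist (S : Schedule α K T σ B) (n : ℕ) :
    bufBefore B S.mid n ++ (((finRange T).drop n).map σ).flatten <+ instanceList σ B := by
  induction n with
  | zero => simp [bufBefore, instanceList]
  | succ n ih =>
    by_cases hn : n < T
    · refine Sublist.trans ?_ ih
      rw [bufBefore_succ _ _ hn, flatten_map_drop_finRange σ hn, ← append_assoc]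
      exact ((tail_sublist _).trans (S.valid ⟨n, hn⟩).sublist).append_right _
    · have hdrop : (finRange T).drop (n + 1) = [] := drop_eq_nil_of_le (by simp; omega)
      simp [bufBefore, hn, hdrop]

omit [DecidableEq α] in
theorem mid_sublist (S : Schedule α K T σ B) (i : Fin T) : S.mid i <+ instanceList σ B := by
  refine (S.valid i).sublist.trans (Sublist.trans ?_ (S.bufBefore_append_sublist i))
  rw [flatten_map_drop_finRange σ i.isLt]
  exact (sublist_append_left _ _).append_left _

omit [DecidableEq α] in
/-- Filtering by `Q n` commutes with the arrival phase of step `n` (`ArrStep.filter`); `hstep`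
asks the same of its transmission phase. -/
@[simps]
def filterMid (S : Schedule α K T σ B) (Q : ℕ → α → Bool) {B' : List α}
    (hB : B.filter (Q 0) = B')
    (hstep : ∀ i : Fin T, (S.mid i).tail.filter (Q (i + 1)) = ((S.mid i).filter (Q i)).tail) :
    Schedule α K T σ B' where
  mid i := (S.mid i).filter (Q i)
  valid i := by
    have hbuf : ∀ n ≤ T, bufBefore B' (fun i => (S.mid i).filter (Q i)) n
        = (bufBefore B S.mid n).filter (Q n) := by
      rintro (_ | n) hn
      · exact hB.symm
      · rw [bufBefore_succ _ _ hn, bufBefore_succ _ _ hn]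
        exact (hstep ⟨n, hn⟩).symm
    rw [hbuf i i.isLt.le]
    exact (S.valid i).filter (Q i)

end Schedule

/-- `pending A m n p`: `p ∈ A` has not been sent before step `n` by the schedule whose buffer at
step `k` consists of the pending packets of `m k`, and which sends the first of them. -/
def pending (A : Finset α) (m : ℕ → List α) : ℕ → α → Bool
  | 0 => fun p => p ∈ A
  | n + 1 => fun p => pending A m n p && (m n).find? (pending A m n) != some p

theorem mem_of_pending {A : Finset α} {m : ℕ → List α} {p : α} :
    ∀ {n}, pending A m n p → p ∈ A
  | 0, h => by simpa [pending] using h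
  | n + 1, h => by
    simp only [pending, Bool.and_eq_true] at h
    exact mem_of_pending h.1

theorem exists_find?_eq_of_not_pending {A : Finset α} {m : ℕ → List α} {p : α}
    (hp : p ∈ A) :
    ∀ {n}, pending A m n p = false → ∃ k < n, (m k).find? (pending A m k) = some p
  | 0, h => by simp [pending, hp] at h
  | n + 1, h => by
    by_cases hn : pending A m n p
    · exact ⟨n, n.lt_succ_self, by simpa [pending, hn] using h⟩
    · obtain ⟨k, hk, hfind⟩ := exists_find?_eq_of_not_pending hp (by simpa using hn)
      exact ⟨k, hk.trans n.lt_succ_self, hfind⟩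

theorem Schedule.exists_emptyStart_trans_eq_inter_arrivals {K T : ℕ} {σ : Fin T → List α}
    {B : List α} (S : Schedule α K T σ B) (hnd : (instanceList σ B).Nodup) :
    ∃ S' : Schedule α K T σ [], S'.trans = S.trans ∩ arrivals σ := by
  set A := S.trans ∩ arrivals σ
  set m : ℕ → List α := fun n => if h : n < T then S.mid ⟨n, h⟩ else []
  have hm (i : Fin T) : m i = S.mid i := dif_pos i.isLt
  have hB : B.filter (pending A m 0) = [] := by
    refine filter_eq_nil_iff.mpr fun p hp hA => notMem_arrivals_of_mem hnd hp ?_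
    exact (Finset.mem_inter.mp (show p ∈ A by simpa [pending] using hA)).2
  have hstep (i : Fin T) :
      (S.mid i).tail.filter (pending A m (i + 1)) = ((S.mid i).filter (pending A m i)).tail := by
    simpa only [pending, hm] using ((S.mid_sublist i).nodup hnd).filter_tail_eq_tail_filter _
  refine ⟨S.filterMid (pending A m) hB hstep, Finset.ext fun p => ?_⟩
  simp only [mem_trans, filterMid_mid, head?_filter]
  constructor
  · rintro ⟨i, hi⟩
    exact mem_of_pending (find?_some hi)
  · intro hpA
    obtain ⟨j, hj⟩ := S.mem_trans.mp (Finset.mem_inter.mp hpA).1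
    cases hpend : pending A m j p
    · obtain ⟨k, hk, hfind⟩ := exists_find?_eq_of_not_pending hpA hpend
      exact ⟨⟨k, hk.trans j.isLt⟩, by simpa [← hm] using hfind⟩
    · exact ⟨j, find?_eq_some_of_head? hj hpend⟩

theorem exists_emptyStart_schedule_trans_eq_general
    (v : α → ℝ) (K T : ℕ)
    (σ : Fin T → List α) (B : List α)
    (hnd : (instanceList σ B).Nodup)
    (S : Schedule α K T σ B) :
    ∃ S' : Schedule α K T σ [],
      S'.trans = S.trans ∩ arrivals σ ∧
      schedVal v S' = ∑ p ∈ S.trans ∩ arrivals σ, v p := by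
  obtain ⟨S', hS'⟩ := S.exists_emptyStart_trans_eq_inter_arrivals hnd
  exact ⟨S', hS', by rw [schedVal, hS']⟩

/-- For any schedule `S` on input `σ` starting from buffer `B`, there exists a schedule
`S'` on `σ` starting from the empty buffer whose transmitted set is exactly
`trans(S) ∩ arrivals(σ)` (the packets transmitted by `S` that arrive in `σ`, as opposed
to those initially resident in `B`); in particular
`v(S') = ∑_{p ∈ trans(S) ∩ arrivals(σ)} v p`. -/
theorem exists_emptyStart_schedule_trans_eq
    (v : α → ℝ) (hv : ∀ p, 0 ≤ v p) (K T : ℕ)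
    (σ : Fin T → List α) (B : List α)
    (hB : B.length ≤ K) (hnd : (instanceList σ B).Nodup)
    (S : Schedule α K T σ B) :
    ∃ S' : Schedule α K T σ [],
      S'.trans = S.trans ∩ arrivals σ ∧
      schedVal v S' = ∑ p ∈ S.trans ∩ arrivals σ, v p :=
  exists_emptyStart_schedule_trans_eq_general v K T σ B hnd S
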